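/- arXiv:1310.5168 — 2 statements merged into one kernel-verified Lean document; each statement's English description precedes it below -/
import Mathlib

section
/- For every integer p ≥ 0, the sum over i from 1 to p of i·C(2p+2, 2i+1) equals p·2^(2p). -/
/-!
Reflecting `i ↦ p - i` fixes `C(2p+2, 2i+1)`, because `2(p-i)+1 = (2p+2) - (2i+1)`. Adding the
sum to its reflection therefore gives `2S = p · ∑ᵢ C(2p+2, 2i+1)`, and by Pascal's rule the
odd-indexed entries of row `2p+2` add up to the whole of row `2p+1`, that is, to `2^(2p+1)`.
-/

open Finset

theorem Finset.sum_range_two_mul {M : Type*} [AddCommMonoid M] (f : ℕ → M) (m : ℕ) :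
    ∑ k ∈ range (2 * m), f k = ∑ i ∈ range m, (f (2 * i) + f (2 * i + 1)) := by
  induction m with
  | zero => simp
  | succ m ih =>
    rw [mul_add, mul_one, sum_range_succ, sum_range_succ, sum_range_succ, ih, add_assoc]

theorem Nat.sum_range_choose_odd (m : ℕ) :
    ∑ i ∈ range (m + 1), (2 * m + 2).choose (2 * i + 1) = 2 ^ (2 * m + 1) := by
  have pascal (i : ℕ) : (2 * m + 2).choose (2 * i + 1) =
      (2 * m + 1).choose (2 * i) + (2 * m + 1).choose (2 * i + 1) :=
    Nat.choose_succ_succ' _ _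
  rw [sum_congr rfl fun i _ => pascal i, ← sum_range_two_mul, ← Nat.sum_range_choose]
  ring_nf

theorem Finset.two_nsmul_sum_range_nsmul_of_reflect {M : Type*} [AddCommMonoid M] (f : ℕ → M)
    (n : ℕ) (hf : ∀ i ≤ n, f (n - i) = f i) :
    2 • ∑ i ∈ range (n + 1), i • f i = n • ∑ i ∈ range (n + 1), f i := by
  conv_lhs => rw [two_nsmul]; enter [2]; rw [← sum_range_reflect]
  rw [← sum_add_distrib, smul_sum]
  refine sum_congr rfl fun i hi => ?_
  have hi : i ≤ n := Nat.lt_succ_iff.mp (mem_range.mp hi)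
  rw [add_tsub_cancel_right, hf i hi, ← add_smul, Nat.add_sub_cancel' hi]

theorem sum_i_choose_odd (p : ℕ) :
    ∑ i ∈ Finset.Icc 1 p, i * Nat.choose (2 * p + 2) (2 * i + 1) =
      p * 2 ^ (2 * p) := by
  have reflect (i : ℕ) (hi : i ≤ p) :
      (2 * p + 2).choose (2 * (p - i) + 1) = (2 * p + 2).choose (2 * i + 1) := by
    rw [← Nat.choose_symm (by omega)]
    congr 1
    omega
  have h :=
    two_nsmul_sum_range_nsmul_of_reflect (fun i => (2 * p + 2).choose (2 * i + 1)) p reflect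
  rw [Nat.sum_range_choose_odd, range_eq_Ico, sum_eq_sum_Ico_succ_bot (by omega), zero_smul,
    zero_add, zero_add, Ico_add_one_right_eq_Icc, pow_succ] at h
  simp only [smul_eq_mul] at h
  linarith
end

section
/- For every integer p ≥ 0, the double sum over i from 1 to p and over k from 2i-1 to 2p of i·2^(-k)·C(k+2, 2i+1) equals p² + p/2. -/
/-!
Swapping the two sums, the inner sum `∑ i, i * C(k + 2, 2i + 1)` equals `k * 2 ^ k / 2`:
by Pascal's rule, twice it plus the odd-index sum of row `k + 1` (which is `2 ^ k`) is
`∑ j, j * C(k + 1, j) = (k + 1) * 2 ^ k`. The double sum thus collapses to `∑_{k ≤ 2p} k / 2`.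
-/

open Finset

theorem sum_range_two_mul_eq_sum_even_add_odd {M : Type*} [AddCommMonoid M] (f : ℕ → M)
    (N : ℕ) :
    ∑ j ∈ range (2 * N), f j = ∑ i ∈ range N, (f (2 * i) + f (2 * i + 1)) := by
  induction N with
  | zero => simp
  | succ N ih =>
    rw [mul_add, mul_one, sum_range_succ, sum_range_succ, sum_range_succ, ih, add_assoc]

theorem Nat.sum_range_choose_of_lt {n L : ℕ} (h : n < L) :
    ∑ j ∈ range L, n.choose j = 2 ^ n := by
  rw [← Nat.sum_range_choose, eq_comm]
  exact sum_subset (range_subset_range.2 h) fun j _ hj ↦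
    Nat.choose_eq_zero_of_lt (by simpa using hj)

theorem Nat.sum_range_mul_choose_of_lt {n L : ℕ} (h : n < L) :
    ∑ j ∈ range L, j * n.choose j = n * 2 ^ (n - 1) := by
  rw [← Nat.sum_range_mul_choose, eq_comm]
  exact sum_subset (range_subset_range.2 h) fun j _ hj ↦ by
    rw [Nat.choose_eq_zero_of_lt (by simpa using hj), mul_zero]

theorem Nat.sum_range_choose_two_mul_add_one {n N : ℕ} (h : n < 2 * N) :
    ∑ i ∈ range N, (n + 1).choose (2 * i + 1) = 2 ^ n := by
  simp only [Nat.choose_succ_succ', ← sum_range_two_mul_eq_sum_even_add_odd]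
  exact Nat.sum_range_choose_of_lt h

theorem Nat.two_mul_sum_range_mul_choose_two_mul_add_one {m N : ℕ} (h : m ≤ 2 * N) :
    2 * ∑ i ∈ range (N + 1), i * (m + 2).choose (2 * i + 1) = m * 2 ^ m := by
  have pascal : ∀ i, 2 * (i * (m + 2).choose (2 * i + 1)) + (m + 1).choose (2 * i + 1) =
      2 * i * (m + 1).choose (2 * i) + (2 * i + 1) * (m + 1).choose (2 * i + 1) := fun i ↦ by
    rw [Nat.choose_succ_succ']; ring
  have hsum : 2 * ∑ i ∈ range (N + 1), i * (m + 2).choose (2 * i + 1) +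
      ∑ i ∈ range (N + 1), (m + 1).choose (2 * i + 1) = (m + 1) * 2 ^ m := by
    rw [mul_sum, ← sum_add_distrib]
    simp only [pascal]
    rw [← sum_range_two_mul_eq_sum_even_add_odd (fun j ↦ j * (m + 1).choose j),
      Nat.sum_range_mul_choose_of_lt (by omega), Nat.add_sub_cancel]
  rw [Nat.sum_range_choose_two_mul_add_one (by omega)] at hsum
  linarith

theorem sum_Icc_mul_zpow_mul_choose {p k : ℕ} (hk : k ≤ 2 * p) :
    ∑ i ∈ Icc 1 p, (i : ℚ) * (2 : ℚ) ^ (-(k : ℤ)) * (k + 2).choose (2 * i + 1) =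
      k / 2 := by
  have key : 2 * ∑ i ∈ Icc 1 p, i * (k + 2).choose (2 * i + 1) = k * 2 ^ k := by
    rw [← Nat.two_mul_sum_range_mul_choose_two_mul_add_one hk]
    congr 1
    exact sum_subset (fun i hi ↦ by simp only [mem_Icc, mem_range] at hi ⊢; omega)
      fun i hi hi' ↦ by
        obtain rfl : i = 0 := by simp only [mem_Icc, mem_range] at hi hi'; omega
        rw [zero_mul]
  have key' : (2 : ℚ) * ∑ i ∈ Icc 1 p, (i : ℚ) * (k + 2).choose (2 * i + 1) = k * 2 ^ k :=
    mod_cast key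
  simp only [zpow_neg, zpow_natCast, mul_right_comm _ ((2 : ℚ) ^ k)⁻¹, ← sum_mul]
  field_simp
  linarith

theorem double_sum_i2_even (p : ℕ) :
    ∑ i ∈ Finset.Icc 1 p, ∑ k ∈ Finset.Icc (2 * i - 1) (2 * p),
        (i : ℚ) * (2 : ℚ) ^ (-(k : ℤ)) * Nat.choose (k + 2) (2 * i + 1) =
      (p : ℚ) ^ 2 + (p : ℚ) / 2 := by
  calc _ = ∑ i ∈ Icc 1 p, ∑ k ∈ range (2 * p + 1),
        (i : ℚ) * (2 : ℚ) ^ (-(k : ℤ)) * Nat.choose (k + 2) (2 * i + 1) :=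
        sum_congr rfl fun i _ ↦
          sum_subset (fun k hk ↦ by simp only [mem_Icc, mem_range] at hk ⊢; omega)
            fun k hk hk' ↦ by
              have : k + 2 < 2 * i + 1 := by simp only [mem_Icc, mem_range] at hk hk'; omega
              rw [Nat.choose_eq_zero_of_lt this, Nat.cast_zero, mul_zero]
    _ = ∑ k ∈ range (2 * p + 1), (k : ℚ) / 2 := by
        rw [sum_comm]
        exact sum_congr rfl fun k hk ↦
          sum_Icc_mul_zpow_mul_choose (Nat.lt_succ_iff.mp (mem_range.mp hk))
    _ = (p : ℚ) ^ 2 + (p : ℚ) / 2 := by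
        have gauss :
            ((∑ k ∈ range (2 * p + 1), k : ℕ) : ℚ) * 2 = (2 * p + 1) * (2 * p) := by
          exact_mod_cast sum_range_id_mul_two (2 * p + 1)
        rw [← sum_div, ← Nat.cast_sum]
        linear_combination gauss / 4
end
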